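/- arXiv:2405.20753 — 3 statements merged into one kernel-verified Lean document; each statement's English description precedes it below -/
import Mathlib

section
/- Let Σ be a ranked alphabet containing a binary symbol and let B be a strong bimonoid which is not locally finite. Then there exists a (Σ,B)-weighted tree automaton 𝒜 such that the image im(⟦𝒜⟧_init) of its initial algebra semantics is infinite. -/
/-- A strong bimonoid: `(B,+,0)` a commutative monoid, `(B,*,1)` a monoid,
and `0` annihilating for `*`. -/
class StrongBimonoid (B : Type*) extends AddCommMonoid B, MonoidWithZero B

section Defs

variable {B : Type*} [StrongBimonoid B]

/-- The closure `⟨A⟩_{⊕,⊗,0,1}` of a subset `A`: the smallest subset of `B`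
containing `A ∪ {0,1}` and closed under `+` and `*`. -/
inductive SBClosure (A : Set B) : B → Prop
  | base {a : B} : a ∈ A → SBClosure A a
  | zero : SBClosure A 0
  | one : SBClosure A 1
  | add {a b : B} : SBClosure A a → SBClosure A b → SBClosure A (a + b)
  | mul {a b : B} : SBClosure A a → SBClosure A b → SBClosure A (a * b)

/-- `B` is locally finite if the closure of each finite subset is finite. -/
def SBLocallyFinite (B : Type*) [StrongBimonoid B] : Prop :=
  ∀ A : Set B, A.Finite → {b : B | SBClosure A b}.Finite

/-- The weak closure `wcl(A)`: the smallest subset containing `A ∪ {0,1}` closed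
under addition and under multiplication on the right by elements of `A`. -/
inductive WeakClosure (A : Set B) : B → Prop
  | base {a : B} : a ∈ A → WeakClosure A a
  | zero : WeakClosure A 0
  | one : WeakClosure A 1
  | add {b b' : B} : WeakClosure A b → WeakClosure A b' → WeakClosure A (b + b')
  | mulr {b a : B} : WeakClosure A b → a ∈ A → WeakClosure A (b * a)

/-- `B` is weakly locally finite if the weak closure of each finite subset is finite. -/
def WeaklyLocallyFinite (B : Type*) [StrongBimonoid B] : Prop :=
  ∀ A : Set B, A.Finite → {b : B | WeakClosure A b}.Finite

/-- `B` is additively locally finite if each finitely generated submonoid of `(B,+,0)` is finite. -/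
def AddLocallyFinite (B : Type*) [StrongBimonoid B] : Prop :=
  ∀ A : Set B, A.Finite → ((AddSubmonoid.closure A : AddSubmonoid B) : Set B).Finite

/-- `B` is multiplicatively locally finite if each finitely generated submonoid of `(B,*,1)` is finite. -/
def MulLocallyFinite (B : Type*) [StrongBimonoid B] : Prop :=
  ∀ A : Set B, A.Finite → ((Submonoid.closure A : Submonoid B) : Set B).Finite

/-- `B` is bi-locally finite if it is additively and multiplicatively locally finite. -/
def BiLocallyFinite (B : Type*) [StrongBimonoid B] : Prop :=
  AddLocallyFinite B ∧ MulLocallyFinite B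

/-- `B` is almost idempotent if `b + b + b = b + b` for all `b`. -/
def AlmostIdempotent (B : Type*) [StrongBimonoid B] : Prop :=
  ∀ b : B, b + b + b = b + b

/-- right-distributivity -/
def SBRightDistributive (B : Type*) [StrongBimonoid B] : Prop :=
  ∀ a b c : B, (a + b) * c = a * c + b * c

/-- left-distributivity -/
def SBLeftDistributive (B : Type*) [StrongBimonoid B] : Prop :=
  ∀ a b c : B, a * (b + c) = a * b + a * c

end Defs

/-- A ranked alphabet: a finite nonempty set of symbols with a rank map,
having at least one nullary symbol. -/
structure RankedAlphabet where
  symb : Type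
  fintype_symb : Fintype symb
  nonempty_symb : Nonempty symb
  rk : symb → ℕ
  exists_nullary : ∃ σ, rk σ = 0

attribute [instance] RankedAlphabet.fintype_symb RankedAlphabet.nonempty_symb

/-- Trees (ground terms) over a ranked alphabet. -/
inductive RTree (S : RankedAlphabet) : Type
  | node (σ : S.symb) (ts : Fin (S.rk σ) → RTree S) : RTree S

/-- A weighted tree automaton over the ranked alphabet `S` and the strong bimonoid `B`. -/
structure WTA (S : RankedAlphabet) (B : Type) [StrongBimonoid B] where
  Q : Type
  fintypeQ : Fintype Q
  nonemptyQ : Nonempty Q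
  δ : (σ : S.symb) → (Fin (S.rk σ) → Q) → Q → B
  F : Q → B

attribute [instance] WTA.fintypeQ WTA.nonemptyQ

variable {S : RankedAlphabet} {B : Type} [StrongBimonoid B]

/-- The vector `h_𝒜(t) ∈ B^Q`:
`h_𝒜(σ(t_1,…,t_k))_q = ⊕_{q_1⋯q_k ∈ Q^k} (⊗_i h_𝒜(t_i)_{q_i}) ⊗ δ_k(q_1⋯q_k,σ,q)`. -/
def WTA.h (M : WTA S B) : RTree S → M.Q → B
  | .node σ ts => fun q =>
      ∑ qs : Fin (S.rk σ) → M.Q,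
        (((List.finRange (S.rk σ)).map (fun i => M.h (ts i) (qs i))).prod) * M.δ σ qs q

/-- The initial algebra semantics `⟦𝒜⟧_init(t) = ⊕_{q ∈ Q} h_𝒜(t)_q ⊗ F_q`. -/
noncomputable def WTA.initSem (M : WTA S B) (t : RTree S) : B :=
  ∑ q, M.h t q * M.F q

/-!
Since `B` is not locally finite, some finite `A = {a 0, …, a (n - 1)}` has an infinite closure
`⟨A⟩`, so it suffices to realise every element of `⟨A⟩` as a value of one wta. Such an element is
the value of a term over `+`, `*`, `0`, `1` and the `a i`, which is encoded as a tree over one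
binary and one nullary symbol. All binary transition weights of `evalWTA a` are `0` or `1`, so
at a binary node `h` is a plain sum of products over a set of pairs of states
(`WTA.ofRules_h_bin`), and evaluating an encoding never uses distributivity, which `B` lacks. A node `bin t (comb k)` applies the `k`-th operation `op k` to
`t`: the comb `comb k` has the unit vector `[j = k]` at the states `tag j`. The state `one` has
weight `1` on every encoding, which lets the state `add` form `x * 1 + 1 * y`.
-/

open Finset

namespace RTree

def leaf (σ : S.symb) (hσ : S.rk σ = 0) : RTree S :=
  .node σ fun i => (i.cast hσ).elim0

def bin (σ : S.symb) (hσ : S.rk σ = 2) (t₁ t₂ : RTree S) : RTree S :=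
  .node σ fun i => ![t₁, t₂] (i.cast hσ)

end RTree

lemma sum_pi_listProd_mul_of_eq_zero {Q : Type} [Fintype Q] {k : ℕ} (hk : k = 0)
    (g : Fin k → Q → B) (d : (Fin k → Q) → B) (qs₀ : Fin k → Q) :
    ∑ qs : Fin k → Q, ((List.finRange k).map fun i => g i (qs i)).prod * d qs = d qs₀ := by
  subst hk
  simp [Subsingleton.elim _ qs₀]

lemma sum_pi_listProd_mul_of_eq_two {Q : Type} [Fintype Q] {k : ℕ} (hk : k = 2)
    (g : Fin k → Q → B) (d : (Fin k → Q) → B) :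
    ∑ qs : Fin k → Q, ((List.finRange k).map fun i => g i (qs i)).prod * d qs =
      ∑ q₁, ∑ q₂, g (Fin.cast hk.symm 0) q₁ * g (Fin.cast hk.symm 1) q₂ *
        d fun i => ![q₁, q₂] (i.cast hk) := by
  subst hk
  rw [← (piFinTwoEquiv fun _ => Q).symm.sum_comp, Fintype.sum_prod_type]
  refine sum_congr rfl fun q₁ _ => sum_congr rfl fun q₂ _ => ?_
  have : (piFinTwoEquiv fun _ => Q).symm (q₁, q₂) = ![q₁, q₂] := by
    ext i; fin_cases i <;> rfl
  simp [this, List.finRange_succ, mul_assoc]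

namespace WTA

lemma h_leaf (M : WTA S B) {σ : S.symb} (hσ : S.rk σ = 0) (q : M.Q) :
    M.h (.leaf σ hσ) q = M.δ σ (fun i => (i.cast hσ).elim0) q :=
  sum_pi_listProd_mul_of_eq_zero hσ _ _ _

lemma h_bin (M : WTA S B) {σ : S.symb} (hσ : S.rk σ = 2) (t₁ t₂ : RTree S) (q : M.Q) :
    M.h (.bin σ hσ t₁ t₂) q =
      ∑ q₁, ∑ q₂, M.h t₁ q₁ * M.h t₂ q₂ * M.δ σ (fun i => ![q₁, q₂] (i.cast hσ)) q := by
  rw [RTree.bin, h]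
  exact (sum_pi_listProd_mul_of_eq_two hσ _ _).trans (by simp)

variable {Q : Type} [Fintype Q] [DecidableEq Q]

abbrev ofRules (S : RankedAlphabet) (leafWeight : Q → B) (rule : Q → Finset (Q × Q))
    (accept : Q) : WTA S B where
  Q := Q
  fintypeQ := ‹_›
  nonemptyQ := ⟨accept⟩
  δ σ qs q :=
    if hσ : S.rk σ = 2 then
      if (qs (Fin.cast hσ.symm 0), qs (Fin.cast hσ.symm 1)) ∈ rule q then 1 else 0
    else if S.rk σ = 0 then leafWeight q else 0
  F q := if q = accept then 1 else 0

variable (leafWeight : Q → B) (rule : Q → Finset (Q × Q)) (accept : Q)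

lemma ofRules_h_leaf {σ : S.symb} (hσ : S.rk σ = 0) (q : Q) :
    (ofRules S leafWeight rule accept).h (.leaf σ hσ) q = leafWeight q := by
  simp [h_leaf, ofRules, hσ]

lemma ofRules_h_bin {σ : S.symb} (hσ : S.rk σ = 2) (t₁ t₂ : RTree S) (q : Q) :
    (ofRules S leafWeight rule accept).h (.bin σ hσ t₁ t₂) q =
      ∑ p ∈ rule q, (ofRules S leafWeight rule accept).h t₁ p.1 *
        (ofRules S leafWeight rule accept).h t₂ p.2 := by
  refine (h_bin (ofRules S leafWeight rule accept) hσ t₁ t₂ q).trans ?_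
  simp [hσ, mul_ite, ← sum_product']

lemma ofRules_initSem (t : RTree S) :
    (ofRules S leafWeight rule accept).initSem t = (ofRules S leafWeight rule accept).h t accept := by
  refine (Fintype.sum_eq_single accept fun q hq => ?_).trans ?_ <;>
    simp [ofRules, *]

end WTA

inductive EvalState (n : ℕ)
  | one
  | val
  | mul
  | add
  | const (i : Fin n)
  | tag (k : Fin (n + 2))
  deriving DecidableEq, Fintype

namespace EvalState

variable {n : ℕ}

def op : Fin (n + 2) → EvalState n :=
  Fin.cases mul (Fin.cases add const)

def leafWeight (a : Fin n → B) : EvalState n → B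
  | one | val => 1
  | mul | add => 0
  | const i => a i
  | tag k => if k = 0 then 1 else 0

def rule : EvalState n → Finset (EvalState n × EvalState n)
  | one => {(one, one)}
  | val => univ.image fun k => (op k, tag k)
  | mul => {(val, val)}
  | add => {(val, one), (one, val)}
  | const _ => ∅
  | tag k => Fin.cases ∅ (fun j => {(one, tag j.castSucc)}) k

end EvalState

open EvalState

def evalWTA (S : RankedAlphabet) {n : ℕ} (a : Fin n → B) : WTA S B :=
  .ofRules S (leafWeight a) rule val

section Eval

variable {σ₂ σ₀ : S.symb} (h₂ : S.rk σ₂ = 2) (h₀ : S.rk σ₀ = 0)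

def RTree.comb : ℕ → RTree S
  | 0 => .leaf σ₀ h₀
  | j + 1 => .bin σ₂ h₂ (.leaf σ₀ h₀) (RTree.comb j)

variable {n : ℕ} (a : Fin n → B)

lemma evalWTA_h_leaf (q : EvalState n) : (evalWTA S a).h (.leaf σ₀ h₀) q = leafWeight a q :=
  WTA.ofRules_h_leaf _ _ _ h₀ q

lemma evalWTA_h_bin (t₁ t₂ : RTree S) (q : EvalState n) :
    (evalWTA S a).h (.bin σ₂ h₂ t₁ t₂) q =
      ∑ p ∈ rule q, (evalWTA S a).h t₁ p.1 * (evalWTA S a).h t₂ p.2 :=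
  WTA.ofRules_h_bin _ _ _ h₂ t₁ t₂ q

lemma evalWTA_h_one_bin (t₁ t₂ : RTree S) :
    (evalWTA S a).h (.bin σ₂ h₂ t₁ t₂) one = (evalWTA S a).h t₁ one * (evalWTA S a).h t₂ one := by
  simp [evalWTA_h_bin, rule]

lemma evalWTA_h_mul_bin (t₁ t₂ : RTree S) :
    (evalWTA S a).h (.bin σ₂ h₂ t₁ t₂) mul = (evalWTA S a).h t₁ val * (evalWTA S a).h t₂ val := by
  simp [evalWTA_h_bin, rule]

lemma evalWTA_h_add_bin (t₁ t₂ : RTree S) :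
    (evalWTA S a).h (.bin σ₂ h₂ t₁ t₂) add =
      (evalWTA S a).h t₁ val * (evalWTA S a).h t₂ one +
        (evalWTA S a).h t₁ one * (evalWTA S a).h t₂ val := by
  simp [evalWTA_h_bin, rule]

lemma evalWTA_h_comb_one (j : ℕ) : (evalWTA S a).h (RTree.comb h₂ h₀ j) one = 1 := by
  induction j with
  | zero => simp [RTree.comb, evalWTA_h_leaf, leafWeight]
  | succ j ih => simp [RTree.comb, evalWTA_h_one_bin, evalWTA_h_leaf, ih, leafWeight]

lemma evalWTA_h_comb_tag (j : ℕ) (k : Fin (n + 2)) :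
    (evalWTA S a).h (RTree.comb h₂ h₀ j) (tag k) = if k.val = j then 1 else 0 := by
  induction j generalizing k with
  | zero => simp [RTree.comb, evalWTA_h_leaf, leafWeight, Fin.val_eq_zero_iff]
  | succ j ih =>
    cases k using Fin.cases with
    | zero => simp [RTree.comb, evalWTA_h_bin, rule]
    | succ k => simp [RTree.comb, evalWTA_h_bin, rule, evalWTA_h_leaf, leafWeight, ih]

lemma evalWTA_h_val_bin_comb (t : RTree S) (k : Fin (n + 2)) :
    (evalWTA S a).h (.bin σ₂ h₂ t (RTree.comb h₂ h₀ k)) val = (evalWTA S a).h t (op k) := by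
  rw [evalWTA_h_bin, rule, sum_image fun _ _ _ _ h => (Prod.ext_iff.1 h).2 |> tag.inj]
  simp [evalWTA_h_comb_tag, Fin.val_inj]

end Eval

lemma exists_evalWTA_h_val_eq {σ₂ σ₀ : S.symb} (h₂ : S.rk σ₂ = 2) (h₀ : S.rk σ₀ = 0) {n : ℕ}
    (a : Fin n → B) {b : B} (hb : SBClosure (Set.range a) b) :
    ∃ t : RTree S, (evalWTA S a).h t val = b ∧ (evalWTA S a).h t one = 1 := by
  have h_one_bin_comb (t : RTree S) (k : Fin (n + 2)) :
      (evalWTA S a).h (.bin σ₂ h₂ t (RTree.comb h₂ h₀ k)) one = (evalWTA S a).h t one := by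
    rw [evalWTA_h_one_bin, evalWTA_h_comb_one, mul_one]
  induction hb with
  | base ha =>
    obtain ⟨i, rfl⟩ := ha
    refine ⟨.bin σ₂ h₂ (.leaf σ₀ h₀) (RTree.comb h₂ h₀ (i.succ.succ : Fin (n + 2))), ?_, ?_⟩
    · rw [evalWTA_h_val_bin_comb, evalWTA_h_leaf]; rfl
    · rw [h_one_bin_comb, evalWTA_h_leaf]; rfl
  | zero =>
    -- the product node over a bare leaf, where the state `mul` has weight `0`
    refine ⟨.bin σ₂ h₂ (.leaf σ₀ h₀) (RTree.comb h₂ h₀ (0 : Fin (n + 2))), ?_, ?_⟩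
    · rw [evalWTA_h_val_bin_comb, evalWTA_h_leaf]; rfl
    · rw [h_one_bin_comb, evalWTA_h_leaf]; rfl
  | one => exact ⟨.leaf σ₀ h₀, evalWTA_h_leaf h₀ a val, evalWTA_h_leaf h₀ a one⟩
  | add _ _ ihx ihy =>
    obtain ⟨tx, hx, hx₁⟩ := ihx
    obtain ⟨ty, hy, hy₁⟩ := ihy
    refine ⟨.bin σ₂ h₂ (.bin σ₂ h₂ tx ty) (RTree.comb h₂ h₀ (1 : Fin (n + 2))), ?_, ?_⟩
    · rw [evalWTA_h_val_bin_comb]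
      exact (evalWTA_h_add_bin h₂ a tx ty).trans (by rw [hx, hy, hx₁, hy₁, mul_one, one_mul])
    · rw [h_one_bin_comb, evalWTA_h_one_bin, hx₁, hy₁, mul_one]
  | mul _ _ ihx ihy =>
    obtain ⟨tx, hx, hx₁⟩ := ihx
    obtain ⟨ty, hy, hy₁⟩ := ihy
    refine ⟨.bin σ₂ h₂ (.bin σ₂ h₂ tx ty) (RTree.comb h₂ h₀ (0 : Fin (n + 2))), ?_, ?_⟩
    · rw [evalWTA_h_val_bin_comb]
      exact (evalWTA_h_mul_bin h₂ a tx ty).trans (by rw [hx, hy])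
    · rw [h_one_bin_comb, evalWTA_h_one_bin, hx₁, hy₁, mul_one]

/-- If `Σ` contains a binary symbol and the strong bimonoid `B` is not locally finite,
then there is a wta over `Σ` and `B` whose initial algebra semantics has infinite image. -/
theorem statement3 (S : RankedAlphabet) (hbin : ∃ σ, S.rk σ = 2)
    (B : Type) [StrongBimonoid B] (h : ¬ SBLocallyFinite B) :
    ∃ M : WTA S B, (Set.range M.initSem).Infinite := by
  obtain ⟨σ₂, h₂⟩ := hbin
  obtain ⟨σ₀, h₀⟩ := S.exists_nullary
  obtain ⟨A, hA, hinf⟩ : ∃ A : Set B, A.Finite ∧ {b | SBClosure A b}.Infinite := by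
    simpa [SBLocallyFinite] using h
  obtain ⟨n, a, rfl⟩ := hA.fin_embedding
  refine ⟨evalWTA S a, hinf.mono fun b hb => ?_⟩
  obtain ⟨t, ht, -⟩ := exists_evalWTA_h_val_eq h₂ h₀ a hb
  exact ⟨t, (WTA.ofRules_initSem _ _ _ t).trans ht⟩
end

section
/- Let B be a weakly locally finite strong bimonoid. Then for each monadic ranked alphabet Σ and for each (Σ,B)-weighted tree automaton 𝒜, the set im(⟦𝒜⟧_init) is finite. -/
variable {S : RankedAlphabet} {B : Type} [StrongBimonoid B]

/-!
Over a monadic alphabet every tree is a chain, so `h_𝒜(σ(t))_q` is a sum of terms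
`h_𝒜(t)_{q'} ⊗ δ(q', σ, q)`: each step multiplies on the right by a single weight of `𝒜`.
Hence all values of `h_𝒜`, and then of `⟦𝒜⟧_init`, lie in the weak closure of the finite set of
weights of `𝒜`, which is finite by weak local finiteness.
-/

namespace WeakClosure

variable {B : Type*} [StrongBimonoid B] {A : Set B}

lemma sum {ι : Type*} (s : Finset ι) {f : ι → B} (hf : ∀ i ∈ s, WeakClosure A (f i)) :
    WeakClosure A (∑ i ∈ s, f i) :=
  Finset.sum_induction f (WeakClosure A) (fun _ _ => add) zero hf

lemma prod_finRange_of_le_one {k : ℕ} (hk : k ≤ 1) {g : Fin k → B}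
    (hg : ∀ i, WeakClosure A (g i)) : WeakClosure A ((List.finRange k).map g).prod := by
  obtain rfl | rfl : k = 0 ∨ k = 1 := by omega
  · simpa using one
  · simpa [List.finRange_succ] using hg 0

end WeakClosure

namespace WTA

def weights (M : WTA S B) : Set B :=
  Set.range M.F ∪ ⋃ σ, ⋃ qs, Set.range (M.δ σ qs)

lemma weights_finite (M : WTA S B) : M.weights.Finite :=
  (Set.finite_range _).union <|
    Set.finite_iUnion fun _ => Set.finite_iUnion fun _ => Set.finite_range _

lemma F_mem_weights (M : WTA S B) (q : M.Q) : M.F q ∈ M.weights :=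
  Or.inl ⟨q, rfl⟩

lemma δ_mem_weights (M : WTA S B) (σ : S.symb) (qs : Fin (S.rk σ) → M.Q) (q : M.Q) :
    M.δ σ qs q ∈ M.weights :=
  Or.inr <| Set.mem_iUnion.2 ⟨σ, Set.mem_iUnion.2 ⟨qs, q, rfl⟩⟩

lemma weakClosure_h (hS : ∀ σ, S.rk σ ≤ 1) (M : WTA S B) (t : RTree S) (q : M.Q) :
    WeakClosure M.weights (M.h t q) := by
  induction t generalizing q with
  | node σ ts ih =>
    rw [WTA.h]
    exact WeakClosure.sum _ fun qs _ =>
      .mulr (.prod_finRange_of_le_one (hS σ) fun i => ih i (qs i)) (M.δ_mem_weights σ qs q)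

lemma weakClosure_initSem (hS : ∀ σ, S.rk σ ≤ 1) (M : WTA S B) (t : RTree S) :
    WeakClosure M.weights (M.initSem t) :=
  WeakClosure.sum _ fun q _ => .mulr (M.weakClosure_h hS t q) (M.F_mem_weights q)

end WTA

/-- If `B` is weakly locally finite, then for each monadic ranked alphabet `Σ` and
each wta `𝒜` over `Σ` and `B`, the image of the initial algebra semantics is finite. -/
theorem statement9 (B : Type) [StrongBimonoid B] (h : WeaklyLocallyFinite B) :
    ∀ S : RankedAlphabet, (∀ σ, S.rk σ ≤ 1) →
      ∀ M : WTA S B, (Set.range M.initSem).Finite := by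
  intro S hS M
  exact (h M.weights M.weights_finite).subset <|
    Set.range_subset_iff.2 (M.weakClosure_initSem hS)
end

section
/- Let X be a nonempty set. The relation ∼la on S(X), defined by q∼la r iff q=r or both q and r are large, is a congruence on the algebra S(X). -/
/-- Terms over the ranked alphabet `Σ = {+⁽²⁾, ×⁽²⁾, 0⁽⁰⁾, 1⁽⁰⁾}` and the set `X`. -/
inductive STerm (X : Type) : Type
  | zero : STerm X
  | one : STerm X
  | var (x : X) : STerm X
  | add (s t : STerm X) : STerm X
  | mul (s t : STerm X) : STerm X

namespace STerm

/-- `t.ok` holds iff `t` contains no occurrence of `0`, no subterm `1 × t'` and no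
subterm `t' × 1`. -/
def ok {X : Type} : STerm X → Prop
  | zero => False
  | one => True
  | var _ => True
  | add s t => ok s ∧ ok t
  | mul s t => ok s ∧ ok t ∧ s ≠ one ∧ t ≠ one

/-- A term is simple if it is `0`, or it is different from `0` and contains no `0`,
no subterm of the form `1 × t'` and no subterm of the form `t' × 1`. -/
def Simple {X : Type} (t : STerm X) : Prop := t = zero ∨ ok t

end STerm

/-- The set `ST_Σ(X)` of simple terms. -/
def SimpleT (X : Type) : Type := {t : STerm X // t.Simple}

open Classical in
/-- The addition `+_ST` on simple terms: `t + 0 = 0 + t = t` and `s + t = add s t` otherwise. -/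
noncomputable def stAdd {X : Type} (s t : SimpleT X) : SimpleT X :=
  if hs : s.1 = STerm.zero then t
  else if ht : t.1 = STerm.zero then s
  else ⟨STerm.add s.1 t.1, Or.inr ⟨s.2.resolve_left hs, t.2.resolve_left ht⟩⟩

open Classical in
/-- The multiplication `×_ST` on simple terms: `t × 0 = 0 × t = 0`, `t × 1 = 1 × t = t`,
and `s × t = mul s t` otherwise. -/
noncomputable def stMul {X : Type} (s t : SimpleT X) : SimpleT X :=
  if h0 : s.1 = STerm.zero ∨ t.1 = STerm.zero then ⟨STerm.zero, Or.inl rfl⟩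
  else if hs : s.1 = STerm.one then t
  else if ht : t.1 = STerm.one then s
  else ⟨STerm.mul s.1 t.1,
    Or.inr ⟨s.2.resolve_left (fun h => h0 (Or.inl h)),
      t.2.resolve_left (fun h => h0 (Or.inr h)), hs, ht⟩⟩

/-- The simple term `0`. -/
def stZero {X : Type} : SimpleT X := ⟨STerm.zero, Or.inl rfl⟩

/-- The simple term `1`. -/
def stOne {X : Type} : SimpleT X := ⟨STerm.one, Or.inr trivial⟩

/-- The congruence `≈_E` on `ST_Σ(X)` induced by the identities
`e₁ : z₁+(z₂+z₃) = (z₁+z₂)+z₃`, `e₂ : z₁+z₂ = z₂+z₁`, `e₃ : z₁×(z₂×z₃) = (z₁×z₂)×z₃`,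
`e₄ : z₁+z₁ = z₁+(z₁+z₁)`, `e₅ : (z₁+z₂)×z₃ = (z₁×z₃)+(z₂×z₃)`:
the smallest congruence containing all instances of these identities. -/
inductive eqE {X : Type} : SimpleT X → SimpleT X → Prop
  | addAssoc (a b c : SimpleT X) : eqE (stAdd a (stAdd b c)) (stAdd (stAdd a b) c)
  | addComm (a b : SimpleT X) : eqE (stAdd a b) (stAdd b a)
  | mulAssoc (a b c : SimpleT X) : eqE (stMul a (stMul b c)) (stMul (stMul a b) c)
  | almostIdem (a : SimpleT X) : eqE (stAdd a a) (stAdd a (stAdd a a))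
  | rightDistrib (a b c : SimpleT X) :
      eqE (stMul (stAdd a b) c) (stAdd (stMul a c) (stMul b c))
  | refl (a : SimpleT X) : eqE a a
  | symm {a b : SimpleT X} : eqE a b → eqE b a
  | trans {a b c : SimpleT X} : eqE a b → eqE b c → eqE a c
  | addCongr {a b c d : SimpleT X} : eqE a b → eqE c d → eqE (stAdd a c) (stAdd b d)
  | mulCongr {a b c d : SimpleT X} : eqE a b → eqE c d → eqE (stMul a c) (stMul b d)

instance stSetoid (X : Type) : Setoid (SimpleT X) :=
  ⟨eqE, ⟨eqE.refl, eqE.symm, eqE.trans⟩⟩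

/-- The quotient algebra `S(X) = ST_Σ(X)/≈_E`. -/
def SX (X : Type) : Type := Quotient (stSetoid X)

/-- The addition `+_S` of `S(X)`. -/
noncomputable def sAdd {X : Type} : SX X → SX X → SX X :=
  Quotient.map₂ stAdd fun _ _ h1 _ _ h2 => eqE.addCongr h1 h2

/-- The multiplication `×_S` of `S(X)`. -/
noncomputable def sMul {X : Type} : SX X → SX X → SX X :=
  Quotient.map₂ stMul fun _ _ h1 _ _ h2 => eqE.mulCongr h1 h2

/-- The element `0_S` of `S(X)`. -/
def sZero (X : Type) : SX X := ⟦stZero⟧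

/-- The element `1_S` of `S(X)`. -/
def sOne (X : Type) : SX X := ⟦stOne⟧

namespace STerm

/-- Whether a term is of the form `t₁ × t₂`. -/
def isMul {X : Type} : STerm X → Prop
  | mul _ _ => True
  | _ => False

/-- Whether a term has a subterm of the form `t₁×(t₂×t₃)` or `(t₁×t₂)×t₃`. -/
def nested {X : Type} : STerm X → Prop
  | add s t => nested s ∨ nested t
  | mul s t => isMul s ∨ isMul t ∨ nested s ∨ nested t
  | _ => False

end STerm

/-- An element `p ∈ S(X) ∖ {0_S, 1_S}` is large if `p = [s]_E` for some simple term `s`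
having a subterm of the form `t₁×(t₂×t₃)` or `(t₁×t₂)×t₃`. -/
def Large {X : Type} (p : SX X) : Prop :=
  p ≠ sZero X ∧ p ≠ sOne X ∧ ∃ s : SimpleT X, p = ⟦s⟧ ∧ s.1.nested

/-- The relation `∼la`: `q ∼la r` iff `q = r` or both `q` and `r` are large. -/
def simLa {X : Type} (q r : SX X) : Prop := q = r ∨ (Large q ∧ Large r)

/-!
Whether a simple term is `0`, and whether it is `1`, is invariant under `≈_E`, so a class
represented by a term with a nested product is never `0_S` or `1_S`. Adding anything to such a
term, or multiplying it on either side by a term other than `0`, keeps the nested product.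
Hence `∼la` is compatible with `+_S` and `×_S` in each argument separately, and transitivity
combines the two.
-/

open STerm

variable {X : Type}

lemma stAdd_val_eq_zero {s t : SimpleT X} :
    (stAdd s t).1 = zero ↔ s.1 = zero ∧ t.1 = zero := by
  by_cases hs : s.1 = zero <;> by_cases ht : t.1 = zero <;> simp_all [stAdd]

lemma stAdd_val_eq_one {s t : SimpleT X} :
    (stAdd s t).1 = one ↔ s.1 = zero ∧ t.1 = one ∨ t.1 = zero ∧ s.1 = one := by
  by_cases hs : s.1 = zero <;> by_cases ht : t.1 = zero <;> simp_all [stAdd]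

lemma stMul_val_eq_zero {s t : SimpleT X} :
    (stMul s t).1 = zero ↔ s.1 = zero ∨ t.1 = zero := by
  by_cases h0 : s.1 = zero ∨ t.1 = zero <;> by_cases hs : s.1 = one <;>
    by_cases ht : t.1 = one <;> simp_all [stMul]

lemma stMul_val_eq_one {s t : SimpleT X} :
    (stMul s t).1 = one ↔ s.1 = one ∧ t.1 = one := by
  by_cases h0 : s.1 = zero ∨ t.1 = zero <;> by_cases hs : s.1 = one <;>
    by_cases ht : t.1 = one <;> simp_all [stMul]

lemma stMul_zero_left (t : SimpleT X) : stMul stZero t = stZero :=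
  Subtype.ext (stMul_val_eq_zero.mpr (Or.inl rfl))

lemma stMul_zero_right (t : SimpleT X) : stMul t stZero = stZero :=
  Subtype.ext (stMul_val_eq_zero.mpr (Or.inr rfl))

lemma eqE.val_eq_zero_iff {a b : SimpleT X} (h : eqE a b) : a.1 = zero ↔ b.1 = zero := by
  induction h with
  | symm _ ih => exact ih.symm
  | trans _ _ ih₁ ih₂ => exact ih₁.trans ih₂
  | _ => simp only [stAdd_val_eq_zero, stMul_val_eq_zero, *] <;> tauto

lemma eqE.val_eq_one_iff {a b : SimpleT X} (h : eqE a b) : a.1 = one ↔ b.1 = one := by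
  induction h with
  | symm _ ih => exact ih.symm
  | trans _ _ ih₁ ih₂ => exact ih₁.trans ih₂
  | addCongr hab hcd ih₁ ih₂ =>
    simp only [stAdd_val_eq_one, ih₁, ih₂, hab.val_eq_zero_iff, hcd.val_eq_zero_iff]
  | mulCongr _ _ ih₁ ih₂ => simp only [stMul_val_eq_one, ih₁, ih₂]
  | rightDistrib a b c =>
    have : ¬(c.1 = zero ∧ c.1 = one) := fun ⟨h0, h1⟩ => by rw [h0] at h1; cases h1
    simp only [stAdd_val_eq_one, stMul_val_eq_zero, stMul_val_eq_one]; tauto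
  | _ => simp only [stAdd_val_eq_zero, stAdd_val_eq_one, stMul_val_eq_one] <;> tauto

lemma STerm.nested.ne_zero_and_ne_one {t : STerm X} (h : t.nested) : t ≠ zero ∧ t ≠ one := by
  cases t <;> simp_all [nested]

lemma stAdd_nested_left {s t : SimpleT X} (h : s.1.nested) : (stAdd s t).1.nested := by
  have := h.ne_zero_and_ne_one.1
  by_cases ht : t.1 = zero <;> simp_all [stAdd, nested]

lemma stAdd_nested_right {s t : SimpleT X} (h : t.1.nested) : (stAdd s t).1.nested := by
  have := h.ne_zero_and_ne_one.1
  by_cases hs : s.1 = zero <;> simp_all [stAdd, nested]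

lemma stMul_nested_left {s t : SimpleT X} (h : s.1.nested) (ht : t.1 ≠ zero) :
    (stMul s t).1.nested := by
  have := h.ne_zero_and_ne_one
  by_cases ht1 : t.1 = one <;> simp_all [stMul, nested]

lemma stMul_nested_right {s t : SimpleT X} (h : t.1.nested) (hs : s.1 ≠ zero) :
    (stMul s t).1.nested := by
  have := h.ne_zero_and_ne_one
  by_cases hs1 : s.1 = one <;> simp_all [stMul, nested]

lemma mk_eq_sZero {s : SimpleT X} : (⟦s⟧ : SX X) = sZero X ↔ s.1 = zero :=
  ⟨fun h => ((Quotient.exact h).val_eq_zero_iff).mpr rfl,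
    fun h => congrArg _ (Subtype.ext h)⟩

lemma mk_eq_sOne {s : SimpleT X} : (⟦s⟧ : SX X) = sOne X ↔ s.1 = one :=
  ⟨fun h => ((Quotient.exact h).val_eq_one_iff).mpr rfl,
    fun h => congrArg _ (Subtype.ext h)⟩

lemma sMul_sZero_left (q : SX X) : sMul (sZero X) q = sZero X := by
  induction q using Quotient.ind with
  | _ t => exact congrArg _ (stMul_zero_left t)

lemma sMul_sZero_right (q : SX X) : sMul q (sZero X) = sZero X := by
  induction q using Quotient.ind with
  | _ t => exact congrArg _ (stMul_zero_right t)

lemma large_mk_of_nested {s : SimpleT X} (h : s.1.nested) : Large (⟦s⟧ : SX X) :=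
  ⟨fun h0 => h.ne_zero_and_ne_one.1 (mk_eq_sZero.mp h0),
    fun h1 => h.ne_zero_and_ne_one.2 (mk_eq_sOne.mp h1), s, rfl, h⟩

lemma Large.sAdd_right {p : SX X} (hp : Large p) (q : SX X) : Large (sAdd p q) := by
  obtain ⟨-, -, s, rfl, hs⟩ := hp
  induction q using Quotient.ind with
  | _ t => exact large_mk_of_nested (stAdd_nested_left hs)

lemma Large.sAdd_left {p : SX X} (hp : Large p) (q : SX X) : Large (sAdd q p) := by
  obtain ⟨-, -, s, rfl, hs⟩ := hp
  induction q using Quotient.ind with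
  | _ t => exact large_mk_of_nested (stAdd_nested_right hs)

lemma Large.sMul_right {p q : SX X} (hp : Large p) (hq : q ≠ sZero X) : Large (sMul p q) := by
  obtain ⟨-, -, s, rfl, hs⟩ := hp
  induction q using Quotient.ind with
  | _ t => exact large_mk_of_nested (stMul_nested_left hs (mt mk_eq_sZero.mpr hq))

lemma Large.sMul_left {p q : SX X} (hp : Large p) (hq : q ≠ sZero X) : Large (sMul q p) := by
  obtain ⟨-, -, s, rfl, hs⟩ := hp
  induction q using Quotient.ind with
  | _ t => exact large_mk_of_nested (stMul_nested_right hs (mt mk_eq_sZero.mpr hq))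

section SimLa

lemma simLa_equivalence : Equivalence (simLa (X := X)) where
  refl _ := Or.inl rfl
  symm := by
    rintro a b (rfl | ⟨ha, hb⟩)
    exacts [Or.inl rfl, Or.inr ⟨hb, ha⟩]
  trans := by
    rintro a b c (rfl | ⟨ha, hb⟩) (rfl | ⟨hb', hc⟩)
    exacts [Or.inl rfl, Or.inr ⟨hb', hc⟩, Or.inr ⟨ha, hb⟩, Or.inr ⟨ha, hc⟩]

variable {a b : SX X}

lemma simLa.sAdd_right (h : simLa a b) (c : SX X) : simLa (sAdd a c) (sAdd b c) := by
  rcases h with rfl | ⟨ha, hb⟩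
  exacts [Or.inl rfl, Or.inr ⟨ha.sAdd_right c, hb.sAdd_right c⟩]

lemma simLa.sAdd_left (h : simLa a b) (c : SX X) : simLa (sAdd c a) (sAdd c b) := by
  rcases h with rfl | ⟨ha, hb⟩
  exacts [Or.inl rfl, Or.inr ⟨ha.sAdd_left c, hb.sAdd_left c⟩]

lemma simLa.sMul_right (h : simLa a b) (c : SX X) : simLa (sMul a c) (sMul b c) := by
  rcases h with rfl | ⟨ha, hb⟩
  · exact Or.inl rfl
  by_cases hc : c = sZero X
  · exact Or.inl (by rw [hc, sMul_sZero_right, sMul_sZero_right])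
  · exact Or.inr ⟨ha.sMul_right hc, hb.sMul_right hc⟩

lemma simLa.sMul_left (h : simLa a b) (c : SX X) : simLa (sMul c a) (sMul c b) := by
  rcases h with rfl | ⟨ha, hb⟩
  · exact Or.inl rfl
  by_cases hc : c = sZero X
  · exact Or.inl (by rw [hc, sMul_sZero_left, sMul_sZero_left])
  · exact Or.inr ⟨ha.sMul_left hc, hb.sMul_left hc⟩

end SimLa

theorem statement18_general (X : Type) :
    Equivalence (simLa (X := X)) ∧
    (∀ a b c d : SX X, simLa a b → simLa c d → simLa (sAdd a c) (sAdd b d)) ∧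
    (∀ a b c d : SX X, simLa a b → simLa c d → simLa (sMul a c) (sMul b d)) :=
  ⟨simLa_equivalence,
    fun _ b c _ hab hcd => simLa_equivalence.trans (hab.sAdd_right c) (hcd.sAdd_left b),
    fun _ b c _ hab hcd => simLa_equivalence.trans (hab.sMul_right c) (hcd.sMul_left b)⟩

/-- The relation `∼la` is a congruence on the algebra `S(X)`: it is an equivalence
relation compatible with the operations `+_S` and `×_S`. -/
theorem statement18 (X : Type) (hX : Nonempty X) :
    Equivalence (simLa (X := X)) ∧
    (∀ a b c d : SX X, simLa a b → simLa c d → simLa (sAdd a c) (sAdd b d)) ∧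
    (∀ a b c d : SX X, simLa a b → simLa c d → simLa (sMul a c) (sMul b d)) :=
  statement18_general X
end
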